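/- arXiv:2503.10449 — 2 statements merged into one kernel-verified Lean document; each statement's English description precedes it below -/
import Mathlib

section
/- For a C-pseudo-cone K and v ∈ Ω_C, the radial function satisfies ρ_K(v) = 1/(−h_{K*}(v)) = 1 / inf_{u ∈ Ω_{C°}} |⟨u,v⟩| ρ_{K*}(u). -/
open Set Metric Pointwise

noncomputable section

abbrev E (n : ℕ) := EuclideanSpace ℝ (Fin n)

/-- A closed convex pointed cone with nonempty interior. -/
def IsGoodCone {n : ℕ} (C : Set (E n)) : Prop :=
  IsClosed C ∧ Convex ℝ C ∧ (∀ x ∈ C, ∀ r : ℝ, 0 ≤ r → r • x ∈ C) ∧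
    (∀ x ∈ C, -x ∈ C → x = 0) ∧ (interior C).Nonempty

/-- A `C`-pseudo-cone. -/
def IsPseudoCone {n : ℕ} (C K : Set (E n)) : Prop :=
  K.Nonempty ∧ IsClosed K ∧ Convex ℝ K ∧ K ⊆ C ∧ (0 : E n) ∉ K ∧ K + C = K

/-- The dual cone of `C`. -/
def dualCone {n : ℕ} (C : Set (E n)) : Set (E n) := {x | ∀ y ∈ C, (inner ℝ x y : ℝ) ≤ 0}

/-- Ω_C = S^{n-1} ∩ int C. -/
def Omega {n : ℕ} (C : Set (E n)) : Set (E n) := {v | ‖v‖ = 1} ∩ interior C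

/-- Radial function. -/
def radial {n : ℕ} (K : Set (E n)) (v : E n) : ℝ := sInf {r : ℝ | 0 < r ∧ r • v ∈ K}

/-- Support function. -/
def suppFn {n : ℕ} (K : Set (E n)) (u : E n) : ℝ := sSup ((fun y => (inner ℝ u y : ℝ)) '' K)

/-- Copolar set. -/
def copolar {n : ℕ} (K : Set (E n)) : Set (E n) := {x | ∀ y ∈ K, (inner ℝ x y : ℝ) ≤ -1}

/-- Convexification of `f`. -/
def convexif {n : ℕ} (C : Set (E n)) (f : E n → ℝ) : Set (E n) :=
  ⋂₀ {K | IsPseudoCone C K ∧ ∀ v ∈ Omega C, f v • v ∈ K}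

/-- Pseudo-conjugate of a function on a domain `D` of directions. -/
def pconj {n : ℕ} (D : Set (E n)) (f : E n → ℝ) (u : E n) : ℝ :=
  sSup ((fun v => 1 / (|(inner ℝ u v : ℝ)| * f v)) '' D)

/-- `u` is an outer normal vector of `K` at `x`. -/
def IsNormalAt {n : ℕ} (K : Set (E n)) (u x : E n) : Prop :=
  x ∈ K ∧ ∀ y ∈ K, (inner ℝ u (y - x) : ℝ) ≤ 0

/-! Write `ρ = ρ_K(v)`. The radial value is attained, so `⟪x, ρ • v⟫ ≤ -1` for all `x ∈ K*`,
i.e. `h_{K*}(v) ≤ -ρ⁻¹`. Conversely, for `t < ρ` the point `t • v ∈ C \ K` is separated from `K`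
by a hyperplane; since `K + C = K` its normal lies in `C°`, and rescaled it is a point `x ∈ K*`
with `⟪v, x⟫ > -t⁻¹`.

For the infimum, `r • u ∈ K*` gives `r * |⟪u, v⟫| ≥ ρ⁻¹` by the first inequality. Conversely,
any `x ∈ K*` can be pushed into `int C°` along an interior direction without leaving `K*`, and
its normalisation `u` satisfies `|⟪u, v⟫| * ρ_{K*}(u) ≤ -⟪v, x⟫`; so the infimum is at most
`-h_{K*}(v) = ρ⁻¹`. -/

open RealInnerProductSpace Filter Topology

section InnerProductSpace

variable {F : Type*} [NormedAddCommGroup F] [InnerProductSpace ℝ F]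

lemma exists_inner_lt_of_notMem [CompleteSpace F] {S : Set F} (hconv : Convex ℝ S)
    (hclosed : IsClosed S) {p : F} (hp : p ∉ S) :
    ∃ w : F, ∃ a : ℝ, (∀ y ∈ S, ⟪w, y⟫ < a) ∧ a < ⟪w, p⟫ := by
  obtain ⟨f, a, hfp, hfS⟩ := geometric_hahn_banach_point_closed hconv hclosed hp
  refine ⟨-(InnerProductSpace.toDual ℝ F).symm f, -a, fun y hy => ?_, ?_⟩ <;>
    simp only [inner_neg_left, InnerProductSpace.toDual_symm_apply, neg_lt_neg_iff]
  exacts [hfS y hy, hfp]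

lemma inner_nonpos_of_forall_inner_add_smul_le {w y c : F} {a : ℝ}
    (h : ∀ m : ℝ, 0 ≤ m → ⟪w, y + m • c⟫ ≤ a) : ⟪w, c⟫ ≤ 0 := by
  by_contra! hc
  have hy : ⟪w, y⟫ ≤ a := by simpa using h 0 le_rfl
  have hm := h ((a - ⟪w, y⟫) / ⟪w, c⟫ + 1) (by positivity)
  rw [inner_add_right, real_inner_smul_right, add_mul, div_mul_cancel₀ _ hc.ne'] at hm
  linarith

end InnerProductSpace

variable {n : ℕ}

section Radial

variable {K : Set (E n)} {v : E n}

lemma radial_nonneg : 0 ≤ radial K v :=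
  Real.sInf_nonneg fun _ hr => hr.1.le

lemma radial_le {r : ℝ} (hr : 0 < r) (hrv : r • v ∈ K) : radial K v ≤ r :=
  csInf_le ⟨0, fun _ hs => hs.1.le⟩ ⟨hr, hrv⟩

lemma le_mul_radial {a b : ℝ} (ha : 0 ≤ a) (hne : ∃ r : ℝ, 0 < r ∧ r • v ∈ K)
    (h : ∀ r : ℝ, 0 < r → r • v ∈ K → b ≤ a * r) : b ≤ a * radial K v := by
  obtain ⟨r₀, hr₀⟩ := hne
  rw [radial, ← smul_eq_mul, ← Real.sInf_smul_of_nonneg ha]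
  refine le_csInf ⟨a * r₀, r₀, hr₀, rfl⟩ ?_
  rintro _ ⟨r, ⟨hr, hrv⟩, rfl⟩
  exact h r hr hrv

lemma radial_pos_and_smul_mem_of_isClosed (hK : IsClosed K)
    (hne : ∃ r : ℝ, 0 < r ∧ r • v ∈ K) {ε : ℝ} (hε : 0 < ε)
    (hbd : ∀ r : ℝ, 0 < r → r • v ∈ K → ε ≤ r) :
    0 < radial K v ∧ radial K v • v ∈ K := by
  have hset : {r : ℝ | 0 < r ∧ r • v ∈ K} = Ici ε ∩ (· • v) ⁻¹' K := by
    ext r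
    exact ⟨fun h => ⟨hbd r h.1 h.2, h.2⟩, fun h => ⟨hε.trans_le h.1, h.2⟩⟩
  have hclosed : IsClosed (Ici ε ∩ (· • v) ⁻¹' K) :=
    isClosed_Ici.inter (hK.preimage (continuous_id.smul continuous_const))
  have hmem : radial K v ∈ Ici ε ∩ (· • v) ⁻¹' K := by
    rw [radial, hset]
    obtain ⟨r₀, hr₀⟩ := hne
    exact hclosed.csInf_mem ⟨r₀, hset ▸ hr₀⟩ ⟨ε, fun _ hr => hr.1⟩
  exact ⟨hε.trans_le hmem.1, hmem.2⟩

end Radial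

section DualCone

variable {C : Set (E n)}

lemma convex_dualCone : Convex ℝ (dualCone C) := by
  intro x hx y hy a b ha hb _ c hc
  simp only [inner_add_left, real_inner_smul_left]
  nlinarith [hx c hc, hy c hc]

lemma zero_mem_dualCone : (0 : E n) ∈ dualCone C := fun _ _ => by simp

lemma smul_mem_dualCone {x : E n} (hx : x ∈ dualCone C) {a : ℝ} (ha : 0 ≤ a) :
    a • x ∈ dualCone C := fun c hc => by
  rw [real_inner_smul_left]
  exact mul_nonpos_of_nonneg_of_nonpos ha (hx c hc)

lemma add_mem_dualCone {x y : E n} (hx : x ∈ dualCone C) (hy : y ∈ dualCone C) :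
    x + y ∈ dualCone C := fun c hc => by
  rw [inner_add_left]
  linarith [hx c hc, hy c hc]

lemma smul_mem_interior_dualCone {x : E n} (hx : x ∈ interior (dualCone C)) {a : ℝ}
    (ha : 0 < a) : a • x ∈ interior (dualCone C) := by
  have hsub : a • interior (dualCone C) ⊆ interior (dualCone C) := by
    rw [← interior_smul₀ ha.ne']
    exact interior_mono (smul_set_subset_iff.2 fun _ hy => smul_mem_dualCone hy ha.le)
  exact hsub (smul_mem_smul_set hx)

lemma add_mem_interior_dualCone {x y : E n} (hx : x ∈ dualCone C)
    (hy : y ∈ interior (dualCone C)) : x + y ∈ interior (dualCone C) :=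
  interior_mono (add_subset_iff.2 fun _ ha _ hb => add_mem_dualCone ha hb)
    (subset_interior_add_right (add_mem_add hx hy))

lemma inv_norm_smul_mem_omega_dualCone {x : E n} (hxC : x ∈ interior (dualCone C))
    (hx0 : x ≠ 0) : ‖x‖⁻¹ • x ∈ Omega (dualCone C) :=
  have hx : 0 < ‖x‖ := norm_pos_iff.2 hx0
  ⟨by simp [norm_smul, hx.ne'], smul_mem_interior_dualCone hxC (inv_pos.2 hx)⟩

lemma exists_inner_le_neg_mul_norm_of_mem_interior_dualCone {u : E n}
    (hu : u ∈ interior (dualCone C)) : ∃ δ > 0, ∀ y ∈ C, ⟪u, y⟫ ≤ -δ * ‖y‖ := by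
  obtain ⟨δ, hδ, hball⟩ := Metric.mem_nhds_iff.1 (mem_interior_iff_mem_nhds.1 hu)
  refine ⟨δ / 2, half_pos hδ, fun y hy => ?_⟩
  rcases eq_or_ne y 0 with rfl | hy0
  · simp
  -- test `y` against the point of the ball around `u` pushed towards `y`
  have hmem : u + (δ / 2) • (‖y‖⁻¹ • y) ∈ dualCone C := by
    apply hball
    rw [mem_ball_iff_norm, add_sub_cancel_left, norm_smul, norm_smul, norm_inv, norm_norm,
      inv_mul_cancel₀ (norm_ne_zero_iff.2 hy0), Real.norm_of_nonneg (by positivity)]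
    linarith
  have h := hmem y hy
  rw [inner_add_left, real_inner_smul_left, real_inner_smul_left,
    real_inner_self_eq_norm_sq, pow_two, inv_mul_cancel_left₀ (norm_ne_zero_iff.2 hy0)] at h
  linarith

lemma inner_neg_of_mem_interior_dualCone {u y : E n} (hu : u ∈ interior (dualCone C))
    (hy : y ∈ C) (hy0 : y ≠ 0) : ⟪u, y⟫ < 0 := by
  obtain ⟨δ, hδ, hbound⟩ := exists_inner_le_neg_mul_norm_of_mem_interior_dualCone hu
  nlinarith [hbound y hy, norm_pos_iff.2 hy0]

end DualCone

namespace IsGoodCone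

variable {C : Set (E n)} (hC : IsGoodCone C)
include hC

lemma smul_mem {x : E n} (hx : x ∈ C) {r : ℝ} (hr : 0 ≤ r) : r • x ∈ C :=
  hC.2.2.1 x hx r hr

lemma zero_mem : (0 : E n) ∈ C := by
  obtain ⟨x, hx⟩ := hC.2.2.2.2
  simpa using hC.smul_mem (interior_subset hx) le_rfl

lemma mem_of_forall_dualCone_inner_nonpos {z : E n} (hz : ∀ w ∈ dualCone C, ⟪w, z⟫ ≤ 0) :
    z ∈ C := by
  by_contra hzC
  obtain ⟨w, a, hwC, hwz⟩ := exists_inner_lt_of_notMem hC.2.1 hC.1 hzC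
  have hw : w ∈ dualCone C := fun c hc =>
    inner_nonpos_of_forall_inner_add_smul_le (y := 0) (a := a) fun m hm => by
      simpa using (hwC _ (hC.smul_mem hc hm)).le
  have h0 := hwC 0 hC.zero_mem
  rw [inner_zero_right] at h0
  linarith [hz w hw]

lemma interior_dualCone_nonempty : (interior (dualCone C)).Nonempty := by
  by_contra hempty
  rw [convex_dualCone.interior_nonempty_iff_affineSpan_eq_top] at hempty
  have hspan : Submodule.span ℝ (dualCone C) ≠ ⊤ := by
    intro htop
    apply hempty
    rw [← SetLike.coe_set_eq, ← insert_eq_of_mem zero_mem_dualCone, affineSpan_insert_zero,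
      htop, AffineSubspace.top_coe, Submodule.top_coe]
  -- a nonzero `z` orthogonal to the dual cone lies in `C` together with `-z`
  obtain ⟨z, hz, hz0⟩ := Submodule.ne_bot_iff _ |>.1
    (mt Submodule.orthogonal_eq_bot_iff.1 hspan)
  have hperp : ∀ w ∈ dualCone C, ⟪w, z⟫ = 0 := fun w hw =>
    (Submodule.mem_orthogonal _ z).1 hz w (Submodule.subset_span hw)
  have hzC : z ∈ C := hC.mem_of_forall_dualCone_inner_nonpos fun w hw => (hperp w hw).le
  have hzC' : -z ∈ C := hC.mem_of_forall_dualCone_inner_nonpos fun w hw => by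
    rw [inner_neg_right, hperp w hw, neg_zero]
  exact hz0 (hC.2.2.2.1 z hzC hzC')

lemma omega_dualCone_nonempty (hΩ : (Omega C).Nonempty) : (Omega (dualCone C)).Nonempty := by
  obtain ⟨u, hu⟩ := hC.interior_dualCone_nonempty
  obtain ⟨v, hv1, hv⟩ := hΩ
  have hv0 : v ≠ 0 := by
    rintro rfl
    simp at hv1
  have hu0 : u ≠ 0 := by
    rintro rfl
    simpa using inner_neg_of_mem_interior_dualCone hu (interior_subset hv) hv0
  exact ⟨_, inv_norm_smul_mem_omega_dualCone hu hu0⟩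

end IsGoodCone

namespace IsPseudoCone

variable {C K : Set (E n)} (hK : IsPseudoCone C K)
include hK

lemma isClosed : IsClosed K := hK.2.1

lemma subset : K ⊆ C := hK.2.2.2.1

lemma add_mem {y c : E n} (hy : y ∈ K) (hc : c ∈ C) : y + c ∈ K :=
  hK.2.2.2.2.2 ▸ add_mem_add hy hc

lemma exists_pos_le_norm : ∃ ε > 0, ∀ y ∈ K, ε ≤ ‖y‖ := by
  obtain ⟨ε, hε, hball⟩ := Metric.mem_nhds_iff.1 (hK.isClosed.isOpen_compl.mem_nhds hK.2.2.2.2.1)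
  refine ⟨ε, hε, fun y hy => ?_⟩
  by_contra! h
  exact hball (mem_ball_zero_iff.2 h) hy

lemma mem_dualCone_of_inner_le (hC : IsGoodCone C) {w : E n} {a : ℝ}
    (h : ∀ y ∈ K, ⟪w, y⟫ ≤ a) : w ∈ dualCone C := by
  obtain ⟨y, hy⟩ := hK.1
  exact fun c hc => inner_nonpos_of_forall_inner_add_smul_le fun m hm =>
    h _ (hK.add_mem hy (hC.smul_mem hc hm))

lemma copolar_subset_dualCone (hC : IsGoodCone C) : copolar K ⊆ dualCone C :=
  fun _ hx => hK.mem_dualCone_of_inner_le hC hx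

lemma exists_mem_copolar_inner_gt (hC : IsGoodCone C) {p : E n} (hpC : p ∈ C) (hpK : p ∉ K) :
    ∃ x ∈ copolar K, -1 < ⟪x, p⟫ := by
  obtain ⟨w, a, hwK, hwp⟩ := exists_inner_lt_of_notMem hK.2.2.1 hK.isClosed hpK
  have hw : w ∈ dualCone C := hK.mem_dualCone_of_inner_le hC fun y hy => (hwK y hy).le
  have ha : 0 < -a := neg_pos.2 (hwp.trans_le (hw p hpC))
  refine ⟨(-a)⁻¹ • w, fun y hy => ?_, ?_⟩
  · rw [real_inner_smul_left, inv_mul_le_iff₀ ha]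
    linarith [hwK y hy]
  · rw [real_inner_smul_left, lt_inv_mul_iff₀ ha]
    linarith

lemma exists_pos_smul_mem (hC : IsGoodCone C) {v : E n} (hv : v ∈ interior C) :
    ∃ r : ℝ, 0 < r ∧ r • v ∈ K := by
  obtain ⟨y, hy⟩ := hK.1
  have hlim : Tendsto (fun r : ℝ => v - r⁻¹ • y) atTop (𝓝 v) := by
    simpa using tendsto_const_nhds.sub ((tendsto_inv_atTop_zero (𝕜 := ℝ)).smul_const y)
  obtain ⟨r, hrC, hr⟩ :=
    ((hlim.eventually (mem_interior_iff_mem_nhds.1 hv)).and (eventually_gt_atTop 0)).exists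
  refine ⟨r, hr, ?_⟩
  have h := hK.add_mem hy (hC.smul_mem hrC hr.le)
  rwa [smul_sub, smul_inv_smul₀ hr.ne', add_sub_cancel] at h

lemma radial_pos_and_smul_mem (hC : IsGoodCone C) {v : E n} (hv : v ∈ Omega C) :
    0 < radial K v ∧ radial K v • v ∈ K := by
  obtain ⟨ε, hε, hεK⟩ := hK.exists_pos_le_norm
  refine radial_pos_and_smul_mem_of_isClosed hK.isClosed (hK.exists_pos_smul_mem hC hv.2) hε
    fun r hr hrv => ?_
  simpa [norm_smul, show ‖v‖ = 1 from hv.1, abs_of_pos hr] using hεK _ hrv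

lemma exists_pos_smul_mem_copolar {u : E n} (hu : u ∈ interior (dualCone C)) :
    ∃ r : ℝ, 0 < r ∧ r • u ∈ copolar K := by
  obtain ⟨ε, hε, hεK⟩ := hK.exists_pos_le_norm
  obtain ⟨δ, hδ, hδC⟩ := exists_inner_le_neg_mul_norm_of_mem_interior_dualCone hu
  refine ⟨(δ * ε)⁻¹, by positivity, fun y hy => ?_⟩
  rw [real_inner_smul_left, inv_mul_le_iff₀ (by positivity)]
  nlinarith [hδC y (hK.subset hy), hεK y hy]

lemma copolar_nonempty (hC : IsGoodCone C) : (copolar K).Nonempty := by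
  obtain ⟨u, hu⟩ := hC.interior_dualCone_nonempty
  obtain ⟨r, -, hr⟩ := hK.exists_pos_smul_mem_copolar hu
  exact ⟨_, hr⟩

lemma add_mem_copolar {x c : E n} (hx : x ∈ copolar K) (hc : c ∈ dualCone C) :
    x + c ∈ copolar K := fun y hy => by
  rw [inner_add_left]
  linarith [hx y hy, hc y (hK.subset hy)]

lemma inner_le_neg_inv_radial_of_mem_copolar (hC : IsGoodCone C) {v : E n} (hv : v ∈ Omega C)
    {x : E n} (hx : x ∈ copolar K) : ⟪v, x⟫ ≤ -(radial K v)⁻¹ := by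
  obtain ⟨hρ, hρK⟩ := hK.radial_pos_and_smul_mem hC hv
  have h := mul_le_mul_of_nonneg_left (hx _ hρK) (inv_pos.2 hρ).le
  rwa [real_inner_smul_right, inv_mul_cancel_left₀ hρ.ne', mul_neg_one, real_inner_comm] at h

lemma exists_mem_copolar_neg_inv_lt_inner (hC : IsGoodCone C) {v : E n} (hv : v ∈ Omega C)
    {t : ℝ} (ht : 0 < t) (htρ : t < radial K v) : ∃ x ∈ copolar K, -t⁻¹ < ⟪v, x⟫ := by
  obtain ⟨x, hx, hxt⟩ :=
    hK.exists_mem_copolar_inner_gt hC (hC.smul_mem (interior_subset hv.2) ht.le)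
      fun h => (radial_le ht h).not_gt htρ
  refine ⟨x, hx, ?_⟩
  have h := mul_lt_mul_of_pos_left hxt (inv_pos.2 ht)
  rwa [real_inner_smul_right, inv_mul_cancel_left₀ ht.ne', mul_neg_one, real_inner_comm] at h

lemma suppFn_copolar_eq (hC : IsGoodCone C) {v : E n} (hv : v ∈ Omega C) :
    suppFn (copolar K) v = -(radial K v)⁻¹ := by
  have hρ := (hK.radial_pos_and_smul_mem hC hv).1
  refine IsLUB.csSup_eq ⟨?_, fun b hb => ?_⟩ ?_
  · rintro _ ⟨x, hx, rfl⟩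
    exact hK.inner_le_neg_inv_radial_of_mem_copolar hC hv hx
  · by_contra! hb'
    have hb0 : 0 < -b := by linarith [inv_pos.2 hρ]
    obtain ⟨x, hx, hbx⟩ := hK.exists_mem_copolar_neg_inv_lt_inner hC hv (inv_pos.2 hb0)
      ((inv_lt_comm₀ hb0 hρ).2 (by linarith))
    rw [inv_inv, neg_neg] at hbx
    exact (hb ⟨x, hx, rfl⟩).not_gt hbx
  · obtain ⟨x, hx, -⟩ :=
      hK.exists_mem_copolar_neg_inv_lt_inner hC hv (half_pos hρ) (half_lt_self hρ)
    exact ⟨_, x, hx, rfl⟩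

lemma inv_radial_le_abs_inner_mul_radial_copolar (hC : IsGoodCone C) {v : E n}
    (hv : v ∈ Omega C) {u : E n} (hu : u ∈ Omega (dualCone C)) :
    (radial K v)⁻¹ ≤ |⟪u, v⟫| * radial (copolar K) u := by
  refine le_mul_radial (abs_nonneg _) (hK.exists_pos_smul_mem_copolar hu.2) fun r hr hru => ?_
  have h := hK.inner_le_neg_inv_radial_of_mem_copolar hC hv hru
  rw [real_inner_smul_right, real_inner_comm] at h
  nlinarith [neg_abs_le ⟪u, v⟫]

lemma exists_mem_omega_abs_inner_mul_radial_copolar_le (hC : IsGoodCone C) {v : E n}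
    (hv : v ∈ C) {x : E n} (hx : x ∈ copolar K) (hxC : x ∈ interior (dualCone C)) :
    ∃ u ∈ Omega (dualCone C), |⟪u, v⟫| * radial (copolar K) u ≤ -⟪v, x⟫ := by
  obtain ⟨y, hy⟩ := hK.1
  have hx0 : x ≠ 0 := by
    rintro rfl
    exact absurd (hx y hy) (by simp)
  have hxn : 0 < ‖x‖ := norm_pos_iff.2 hx0
  refine ⟨_, inv_norm_smul_mem_omega_dualCone hxC hx0, ?_⟩
  have hrad : radial (copolar K) (‖x‖⁻¹ • x) ≤ ‖x‖ :=
    radial_le hxn (by rwa [smul_inv_smul₀ hxn.ne'])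
  have hxv : ⟪x, v⟫ ≤ 0 := hK.copolar_subset_dualCone hC hx v hv
  rw [real_inner_smul_left, abs_mul, abs_of_pos (inv_pos.2 hxn), abs_of_nonpos hxv,
    real_inner_comm x v]
  calc ‖x‖⁻¹ * -⟪x, v⟫ * radial (copolar K) (‖x‖⁻¹ • x)
      ≤ ‖x‖⁻¹ * -⟪x, v⟫ * ‖x‖ := by
        gcongr
        exact mul_nonneg (inv_nonneg.2 hxn.le) (neg_nonneg.2 hxv)
    _ = -⟪x, v⟫ := by field_simp

lemma sInf_abs_inner_mul_radial_copolar_le (hC : IsGoodCone C) {v : E n} (hv : v ∈ C) :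
    sInf ((fun u => |⟪u, v⟫| * radial (copolar K) u) '' Omega (dualCone C)) ≤
      -suppFn (copolar K) v := by
  have hbdd : BddBelow ((fun u => |⟪u, v⟫| * radial (copolar K) u) '' Omega (dualCone C)) :=
    ⟨0, by rintro _ ⟨u, -, rfl⟩; exact mul_nonneg (abs_nonneg _) radial_nonneg⟩
  obtain ⟨u₀, hu₀⟩ := hC.interior_dualCone_nonempty
  rw [le_neg]
  refine csSup_le ((hK.copolar_nonempty hC).image _) ?_
  rintro _ ⟨x, hx, rfl⟩
  rw [le_neg]
  show _ ≤ -⟪v, x⟫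
  have hpush : ∀ t : ℝ, 0 < t → sInf _ ≤ -⟪v, x + t • u₀⟫ := fun t ht => by
    obtain ⟨u, hu, hle⟩ := hK.exists_mem_omega_abs_inner_mul_radial_copolar_le hC hv
      (hK.add_mem_copolar hx (smul_mem_dualCone (interior_subset hu₀) ht.le))
      (add_mem_interior_dualCone (hK.copolar_subset_dualCone hC hx)
        (smul_mem_interior_dualCone hu₀ ht))
    exact (csInf_le hbdd ⟨u, hu, rfl⟩).trans hle
  have hlim : Tendsto (fun t : ℝ => -⟪v, x + t • u₀⟫) (𝓝[>] 0) (𝓝 (-⟪v, x⟫)) := by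
    have hcont : Continuous fun t : ℝ => -⟪v, x + t • u₀⟫ := by fun_prop
    simpa using (hcont.tendsto 0).mono_left nhdsWithin_le_nhds
  exact ge_of_tendsto hlim (eventually_nhdsWithin_of_forall hpush)

end IsPseudoCone

theorem stmt7 {n : ℕ} (C K : Set (E n)) (hC : IsGoodCone C) (hK : IsPseudoCone C K)
    (v : E n) (hv : v ∈ Omega C) :
    radial K v = 1 / (-(suppFn (copolar K) v)) ∧
    radial K v = 1 / sInf ((fun u => |(inner ℝ u v : ℝ)| * radial (copolar K) u) '' Omega (dualCone C)) := by
  have hsupp := hK.suppFn_copolar_eq hC hv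
  have hinf : sInf ((fun u => |⟪u, v⟫| * radial (copolar K) u) '' Omega (dualCone C)) =
      (radial K v)⁻¹ := by
    refine le_antisymm ?_ (le_csInf ((hC.omega_dualCone_nonempty ⟨v, hv⟩).image _) ?_)
    · simpa [hsupp] using hK.sInf_abs_inner_mul_radial_copolar_le hC (interior_subset hv.2)
    · rintro _ ⟨u, hu, rfl⟩
      exact hK.inv_radial_le_abs_inner_mul_radial_copolar hC hv hu
  rw [hsupp, hinf, neg_neg, one_div, inv_inv]
  exact ⟨rfl, rfl⟩
end
end

section
/- Let f : Ω_C → (0,∞) be bounded away from 0. Then the negated support function of its convexification satisfies −h_{⟨f⟩}(u) = inf_{v ∈ Ω_C} |⟨u,v⟩| f(v) for all u ∈ Ω_{C°}. -/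
/-! Every point `f v • v` lies in `⟨f⟩`, so `-h_{⟨f⟩}(u) ≤ m := inf_v |⟪u, v⟫| f v`. Conversely,
since `u ∈ C°` the set `C ∩ {y | ⟪u, y⟫ ≤ -m}` is stable under adding `C` and contains every
`f v • v`; as `m > 0` it misses the origin, so it is a `C`-pseudo-cone containing `⟨f⟩`, whence
`h_{⟨f⟩}(u) ≤ -m`. Positivity of `m` comes from `f ≥ a > 0` together with `⟪u, v⟫ ≤ -ε` on `Ω_C`,
which holds because `u` lies in the interior of `C°`. -/

open Set Metric Pointwise

noncomputable section

open RealInnerProductSpace Topology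

lemma add_mem_of_convex_of_smul_mem {V : Type*} [AddCommGroup V] [Module ℝ V] {C : Set V}
    (hconv : Convex ℝ C) (hsmul : ∀ x ∈ C, ∀ r : ℝ, 0 ≤ r → r • x ∈ C)
    {x y : V} (hx : x ∈ C) (hy : y ∈ C) : x + y ∈ C := by
  have hmid := hsmul _ (hconv hx hy (a := 1 / 2) (b := 1 / 2) (by norm_num) (by norm_num)
    (by norm_num)) 2 (by norm_num)
  rwa [smul_add, smul_smul, smul_smul, show (2 : ℝ) * (1 / 2) = 1 by norm_num, one_smul,
    one_smul] at hmid

section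

variable {n : ℕ} {C : Set (E n)} {u : E n}

lemma exists_inner_le_neg_of_mem_interior_dualCone (hu : u ∈ interior (dualCone C)) :
    ∃ ε > 0, ∀ v ∈ C, ‖v‖ = 1 → ⟪u, v⟫ ≤ -ε := by
  obtain ⟨δ, hδ, hball⟩ := Metric.isOpen_iff.1 isOpen_interior u hu
  refine ⟨δ / 2, half_pos hδ, fun v hv hv1 => ?_⟩
  have hmem : u + (δ / 2) • v ∈ dualCone C := by
    refine interior_subset (hball ?_)
    rw [mem_ball, dist_eq_norm, add_sub_cancel_left, norm_smul, hv1, mul_one, Real.norm_eq_abs,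
      abs_of_pos (half_pos hδ)]
    exact half_lt_self hδ
  have h := hmem v hv
  rw [inner_add_left, real_inner_smul_left, real_inner_self_eq_norm_sq, hv1] at h
  linarith

lemma zero_notMem_interior_of_mem_dualCone (hu : u ∈ dualCone C) (hu0 : u ≠ 0) :
    (0 : E n) ∉ interior C := by
  intro h0
  have hsmul : ∀ᶠ t in 𝓝[>] (0 : ℝ), t • u ∈ C := by
    refine nhdsWithin_le_nhds ?_
    have hcont : Continuous fun t : ℝ => t • u := continuous_id.smul continuous_const
    exact hcont.tendsto' 0 0 (zero_smul ℝ u) (mem_interior_iff_mem_nhds.1 h0)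
  obtain ⟨t, htC, ht⟩ := (hsmul.and self_mem_nhdsWithin).exists
  have h := hu _ htC
  rw [real_inner_smul_right, real_inner_self_eq_norm_sq] at h
  have : 0 < t * ‖u‖ ^ 2 := mul_pos ht (pow_pos (norm_pos_iff.2 hu0) 2)
  linarith

lemma Omega_nonempty (hC : IsGoodCone C) (hu : u ∈ dualCone C) (hu0 : u ≠ 0) :
    (Omega C).Nonempty := by
  obtain ⟨-, -, hsmul, -, x, hx⟩ := hC
  have hx0 : x ≠ 0 := fun h => zero_notMem_interior_of_mem_dualCone hu hu0 (h ▸ hx)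
  refine ⟨‖x‖⁻¹ • x, norm_smul_inv_norm hx0, ?_⟩
  have hscaled : ‖x‖⁻¹ • C ⊆ C := by
    rintro _ ⟨y, hy, rfl⟩
    exact hsmul y hy _ (by positivity)
  refine interior_mono hscaled ?_
  rw [interior_smul₀ (inv_ne_zero (norm_ne_zero_iff.2 hx0))]
  exact smul_mem_smul_set hx

lemma isPseudoCone_inter_halfSpace (hC : IsGoodCone C) (hu : u ∈ dualCone C) {m : ℝ}
    (hm : 0 < m) (hne : (C ∩ {y | ⟪u, y⟫ ≤ -m}).Nonempty) :
    IsPseudoCone C (C ∩ {y | ⟪u, y⟫ ≤ -m}) := by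
  obtain ⟨hclosed, hconv, hsmul, -, -⟩ := hC
  obtain ⟨y₀, hy₀, -⟩ := id hne
  have h0 : (0 : E n) ∈ C := by simpa using hsmul y₀ hy₀ 0 le_rfl
  refine ⟨hne, hclosed.inter (isClosed_le (continuous_const.inner continuous_id)
    continuous_const), hconv.inter (convex_halfSpace_le (innerₛₗ ℝ u).isLinear _),
    inter_subset_left, fun h => by simp at h; linarith [h.2], ?_⟩
  refine Subset.antisymm ?_ fun k hk => ⟨k, hk, 0, h0, add_zero k⟩
  rintro _ ⟨x, ⟨hxC, hx⟩, y, hy, rfl⟩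
  refine ⟨add_mem_of_convex_of_smul_mem hconv hsmul hxC hy, ?_⟩
  show ⟪u, x + y⟫ ≤ -m
  linarith [inner_add_right (𝕜 := ℝ) u x y, hu y hy, show ⟪u, x⟫ ≤ -m from hx]

lemma suppFn_le {K : Set (E n)} {c : ℝ} (hK : K.Nonempty) (h : ∀ y ∈ K, ⟪u, y⟫ ≤ c) :
    suppFn K u ≤ c :=
  csSup_le (hK.image _) (forall_mem_image.2 h)

lemma inner_le_suppFn {K : Set (E n)} {c : ℝ} (h : ∀ y ∈ K, ⟪u, y⟫ ≤ c) {y : E n}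
    (hy : y ∈ K) : ⟪u, y⟫ ≤ suppFn K u :=
  le_csSup ⟨c, forall_mem_image.2 h⟩ (mem_image_of_mem _ hy)

lemma smul_mem_convexif {f : E n → ℝ} {v : E n} (hv : v ∈ Omega C) :
    f v • v ∈ convexif C f :=
  mem_sInter.2 fun _ hK => hK.2 v hv

lemma convexif_subset {f : E n → ℝ} {K : Set (E n)} (hK : IsPseudoCone C K)
    (hf : ∀ v ∈ Omega C, f v • v ∈ K) : convexif C f ⊆ K :=
  sInter_subset_of_mem ⟨hK, hf⟩

lemma neg_suppFn_convexif_eq_sInf (hC : IsGoodCone C) (hu : u ∈ dualCone C) {f : E n → ℝ}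
    (hΩ : (Omega C).Nonempty) (hbdd : BddBelow ((fun v => |⟪u, v⟫| * f v) '' Omega C))
    (hpos : 0 < sInf ((fun v => |⟪u, v⟫| * f v) '' Omega C)) :
    -suppFn (convexif C f) u = sInf ((fun v => |⟪u, v⟫| * f v) '' Omega C) := by
  set m := sInf ((fun v => |⟪u, v⟫| * f v) '' Omega C)
  have hm_le : ∀ v ∈ Omega C, m ≤ |⟪u, v⟫| * f v := fun v hv =>
    csInf_le hbdd (mem_image_of_mem _ hv)
  have hinner : ∀ v ∈ Omega C, ⟪u, f v • v⟫ = -(|⟪u, v⟫| * f v) := fun v hv => by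
    rw [real_inner_smul_right, abs_of_nonpos (hu v (interior_subset hv.2))]
    ring
  have hgen : ∀ v ∈ Omega C, f v • v ∈ C ∩ {y | ⟪u, y⟫ ≤ -m} := fun v hv => by
    have hfv : 0 < f v := pos_of_mul_pos_right (hpos.trans_le (hm_le v hv)) (abs_nonneg _)
    refine ⟨hC.2.2.1 v (interior_subset hv.2) _ hfv.le, ?_⟩
    show ⟪u, f v • v⟫ ≤ -m
    linarith [hinner v hv, hm_le v hv]
  obtain ⟨v₀, hv₀⟩ := hΩ
  have hsub := convexif_subset (isPseudoCone_inter_halfSpace hC hu hpos ⟨_, hgen v₀ hv₀⟩) hgen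
  have hbound : ∀ y ∈ convexif C f, ⟪u, y⟫ ≤ -m := fun y hy => (hsub hy).2
  refine le_antisymm ?_ ?_
  · refine le_csInf ⟨_, mem_image_of_mem _ hv₀⟩ (forall_mem_image.2 fun v hv => ?_)
    linarith [inner_le_suppFn hbound (smul_mem_convexif (f := f) hv), hinner v hv]
  · linarith [suppFn_le ⟨_, smul_mem_convexif hv₀⟩ hbound]

end

theorem stmt10 {n : ℕ} (C : Set (E n)) (hC : IsGoodCone C) (f : E n → ℝ)
    (a : ℝ) (ha : 0 < a) (hf : ∀ v ∈ Omega C, a ≤ f v)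
    (u : E n) (hu : u ∈ Omega (dualCone C)) :
    -(suppFn (convexif C f) u) = sInf ((fun v => |(inner ℝ u v : ℝ)| * f v) '' Omega C) := by
  obtain ⟨hu1, huI⟩ := hu
  have huD : u ∈ dualCone C := interior_subset huI
  obtain ⟨ε, hε, hεu⟩ := exists_inner_le_neg_of_mem_interior_dualCone huI
  have hΩ : (Omega C).Nonempty :=
    Omega_nonempty hC huD (norm_ne_zero_iff.1 ((show ‖u‖ = 1 from hu1).trans_ne one_ne_zero))
  have hlb : ∀ s ∈ (fun v => |⟪u, v⟫| * f v) '' Omega C, ε * a ≤ s :=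
    forall_mem_image.2 fun v hv => mul_le_mul (le_abs.2 (Or.inr (by
      linarith [hεu v (interior_subset hv.2) hv.1]))) (hf v hv) ha.le (abs_nonneg _)
  exact neg_suppFn_convexif_eq_sInf hC huD hΩ ⟨_, hlb⟩
    ((mul_pos hε ha).trans_le (le_csInf (hΩ.image _) hlb))
end
end
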